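/- Let (V,P) be a mixing Markov chain whose Markov measure μ is the measure of maximal entropy on its support X. Then L(V,P) = h(V,P), i.e., the Perron eigenvalue λ of Q(u,v) = P(u,v)² satisfies −log λ = h(μ). -/

import Mathlib

/-!
Let `A` be the 0/1 matrix of allowed transitions of `P`, with Perron eigenvalue `ρ` and positive
eigenvector `r`. Gibbs' inequality, applied row by row, shows that every stationary chain on the
graph of `A` has entropy at most `log ρ`, with equality for a positive stationary distribution
only at the Parry chain `r v / (ρ r u)`, whose entropy is `log ρ`. Maximality of `h(P)` therefore
forces `P` to be the Parry chain. Then `Q(u,v) = P(u,v)²` has the positive eigenvector `r⁻¹` with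
eigenvalue `ρ⁻¹`, and a nonnegative matrix has only one eigenvalue with a positive eigenvector, so
`λ = ρ⁻¹` and `-log λ = log ρ = h(P)`.
-/

open Finset Filter
open scoped ENNReal

noncomputable section

variable {V : Type*}

/-- `P` is a stochastic transition matrix. -/
def IsStochastic [Fintype V] (P : Matrix V V ℝ) : Prop :=
  (∀ u v, 0 ≤ P u v) ∧ ∀ u, ∑ v, P u v = 1

/-- The chain `(V,P)` is mixing: some power of `P` has all entries positive. -/
def IsMixing [Fintype V] [DecidableEq V] (P : Matrix V V ℝ) : Prop :=
  ∃ n : ℕ, 0 < n ∧ ∀ u v, 0 < (P ^ n) u v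

/-- `pi` is a stationary distribution for `P`. -/
def IsStationaryDistrib [Fintype V] (P : Matrix V V ℝ) (pi : V → ℝ) : Prop :=
  (∀ v, 0 ≤ pi v) ∧ (∑ v, pi v = 1) ∧ ∀ v, ∑ u, pi u * P u v = pi v

/-- One step of the chain killed on the set `B`. -/
def killedStep [Fintype V] [DecidableEq V] (P : Matrix V V ℝ) (B : Finset V) (ν : V → ℝ) : V → ℝ :=
  fun v => ∑ u, if u ∈ B then 0 else ν u * P u v

/-- `avoidProb P B ν t = P_ν(T_B > t)`, the probability that the chain with initial
distribution `ν` avoids `B` at all times `0,…,t`; here `T_B = inf {t ≥ 0 : X_t ∈ B}`. -/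
def avoidProb [Fintype V] [DecidableEq V] (P : Matrix V V ℝ) (B : Finset V) (ν : V → ℝ) (t : ℕ) : ℝ :=
  ∑ u, if u ∈ B then 0 else ((killedStep P B)^[t] ν) u

/-- Point mass at `v`. -/
def pointMass [DecidableEq V] (v : V) : V → ℝ := fun u => if u = v then 1 else 0

/-- `E_v(T_B)`, as an extended real (infinite if `B` is not reachable). -/
def hitExp [Fintype V] [DecidableEq V] (P : Matrix V V ℝ) (B : Finset V) (v : V) : ℝ≥0∞ :=
  ∑' t : ℕ, ENNReal.ofReal (avoidProb P B (pointMass v) t)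

/-- `m_B = max_v E_v(T_B)`. -/
def maxHitExp [Fintype V] [DecidableEq V] (P : Matrix V V ℝ) (B : Finset V) : ℝ≥0∞ :=
  ⨆ v : V, hitExp P B v

/-- Transition matrix of two independent walkers. -/
def prodMatrix (P : Matrix V V ℝ) : Matrix (V × V) (V × V) ℝ :=
  fun p q => P p.1 q.1 * P p.2 q.2

/-- The diagonal of `V × V`. -/
def diagSet (V : Type*) [Fintype V] [DecidableEq V] : Finset (V × V) :=
  univ.filter fun p => p.1 = p.2

/-- `P(m(u,v) > t)`: the probability that two independent walkers started at `u` and `v`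
have not met by time `t`. -/
def meetSurvival [Fintype V] [DecidableEq V] (P : Matrix V V ℝ) (u v : V) (t : ℕ) : ℝ :=
  avoidProb (prodMatrix P) (diagSet V) (pointMass (u, v)) t

/-- `E(m(u,v))`, the expected meeting time of walkers started at `u`, `v`. -/
def meetExp [Fintype V] [DecidableEq V] (P : Matrix V V ℝ) (u v : V) : ℝ :=
  ∑' t : ℕ, meetSurvival P u v t

/-- `m* = max_{u,v} E(m(u,v))`. -/
def maxMeetExp [Fintype V] [DecidableEq V] (P : Matrix V V ℝ) : ℝ :=
  ⨆ p : V × V, meetExp P p.1 p.2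

/-- `m̄ = Σ_{u,v} pi(u) pi(v) E(m(u,v))`. -/
def meanMeetExp [Fintype V] [DecidableEq V] (P : Matrix V V ℝ) (pi : V → ℝ) : ℝ :=
  ∑ u, ∑ v, pi u * pi v * meetExp P u v

/-- Transition matrix of the coalescing random walk: the state `f : V → V` records the
current position of the walker started at each site; walkers at the same site move together. -/
def coalMatrix [Fintype V] [DecidableEq V] (P : Matrix V V ℝ) : Matrix (V → V) (V → V) ℝ :=
  fun f g =>
    if ∀ u v, f u = f v → g u = g v then
      ∏ s ∈ univ.image f, (if h : ∃ u, f u = s then P s (g h.choose) else 0)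
    else 0

/-- Constant maps: the coalescing walk has fully coalesced exactly when its state is constant. -/
def constSet (V : Type*) [Fintype V] [DecidableEq V] : Finset (V → V) :=
  univ.filter fun f => ∀ u v : V, f u = f v

/-- `P(C > t)`: the probability that the coalescing random walk started with one walker on
each state has not fully coalesced by time `t`. -/
def coalSurvival [Fintype V] [DecidableEq V] (P : Matrix V V ℝ) (t : ℕ) : ℝ :=
  avoidProb (coalMatrix P) (constSet V) (pointMass id) t

/-- `E(C)`, the expected full coalescence time. -/
def coalExp [Fintype V] [DecidableEq V] (P : Matrix V V ℝ) : ℝ :=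
  ∑' t : ℕ, coalSurvival P t

/-- `E(C²)`, via the tail-sum formula `E(C²) = Σ_{t≥0} P(C > √t)`. -/
def coalMoment2 [Fintype V] [DecidableEq V] (P : Matrix V V ℝ) : ℝ :=
  ∑' t : ℕ, coalSurvival P (Nat.sqrt t)

/-- `μ(w) = pi(w_1) ∏ P(w_j, w_{j+1})`, the stationary measure of the word `w`. -/
def wordProb [Fintype V] (pi : V → ℝ) (P : Matrix V V ℝ) {n : ℕ} (w : Fin (n + 1) → V) : ℝ :=
  pi (w 0) * ∏ i : Fin n, P (w i.castSucc) (w i.succ)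

/-- The state space `V_n` of the `n`-block chain: words of length `n+1` of positive measure. -/
abbrev BlockStates [Fintype V] (pi : V → ℝ) (P : Matrix V V ℝ) (n : ℕ) : Type _ :=
  {w : Fin (n + 1) → V // 0 < wordProb pi P w}

/-- The transition matrix `P_n` of the `n`-block chain. -/
def blockMatrix [Fintype V] [DecidableEq V] (pi : V → ℝ) (P : Matrix V V ℝ) (n : ℕ) :
    Matrix (BlockStates pi P n) (BlockStates pi P n) ℝ :=
  fun u v =>
    if ∀ i : Fin n, u.1 i.succ = v.1 i.castSucc then P (u.1 (Fin.last n)) (v.1 (Fin.last n))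
    else 0

/-- The stationary distribution `π_n` of the `n`-block chain. -/
def blockPi [Fintype V] (pi : V → ℝ) (P : Matrix V V ℝ) (n : ℕ) :
    BlockStates pi P n → ℝ :=
  fun w => wordProb pi P w.1

/-- `Δ_n = Σ_{u ∈ V_n} μ(u)²`. -/
def blockDelta [Fintype V] (pi : V → ℝ) (P : Matrix V V ℝ) (n : ℕ) : ℝ :=
  ∑ w : Fin (n + 1) → V, (wordProb pi P w) ^ 2

/-- The entropy `h(V,P) = -Σ_{u,v} pi(u) P(u,v) log P(u,v)`. -/
def chainEntropy [Fintype V] (P : Matrix V V ℝ) (pi : V → ℝ) : ℝ :=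
  -∑ u, ∑ v, pi u * P u v * Real.log (P u v)

namespace Matrix

variable [Fintype V] {A B : Matrix V V ℝ}

theorem pow_apply_le_pow_apply [DecidableEq V] (hA : ∀ u v, 0 ≤ A u v)
    (hAB : ∀ u v, A u v ≤ B u v) (n : ℕ) (u v : V) : (A ^ n) u v ≤ (B ^ n) u v := by
  induction n generalizing v with
  | zero => rfl
  | succ n ih =>
    rw [pow_succ, pow_succ, mul_apply, mul_apply]
    exact sum_le_sum fun w _ => mul_le_mul (ih w) (hAB w v) (hA w v)
      (pow_apply_nonneg (fun i j => (hA i j).trans (hAB i j)) n u w)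

theorem pow_mulVec_of_mulVec_eq_smul [DecidableEq V] {r : V → ℝ} {ρ : ℝ} (h : A *ᵥ r = ρ • r)
    (n : ℕ) : (A ^ n) *ᵥ r = ρ ^ n • r := by
  induction n with
  | zero => simp
  | succ n ih => rw [pow_succ, ← mulVec_mulVec, h, mulVec_smul, ih, smul_smul, pow_succ']

theorem mulVec_pos_of_pos {x : V → ℝ} (hA : ∀ u v, 0 < A u v) (hx : ∀ v, 0 ≤ x v) (hx0 : x ≠ 0)
    (u : V) : 0 < (A *ᵥ x) u := by
  obtain ⟨v, hv⟩ := Function.ne_iff.1 hx0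
  exact sum_pos' (fun w _ => mul_nonneg (hA u w).le (hx w))
    ⟨v, mem_univ v, mul_pos (hA u v) ((hx v).lt_of_ne' hv)⟩

theorem eigenvalue_le_of_pos_eigenvector [Nonempty V] (hA : ∀ u v, 0 ≤ A u v) {x y : V → ℝ}
    {α β : ℝ} (hx : ∀ v, 0 < x v) (hy : ∀ v, 0 < y v) (hAx : A *ᵥ x = α • x)
    (hAy : A *ᵥ y = β • y) : α ≤ β := by
  obtain ⟨u, -, hu⟩ := exists_min_image univ (fun v => y v / x v) univ_nonempty
  set c := y u / x u
  have hcx : ∀ v, c * x v ≤ y v := fun v =>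
    (le_div_iff₀ (hx v)).1 (hu v (mem_univ v))
  have key : (A *ᵥ (c • x)) u ≤ (A *ᵥ y) u :=
    sum_le_sum fun v _ => mul_le_mul_of_nonneg_left (hcx v) (hA u v)
  rw [mulVec_smul, hAx, hAy] at key
  simp only [Pi.smul_apply, smul_eq_mul] at key
  have hcxu : c * x u = y u := div_mul_cancel₀ _ (hx u).ne'
  refine le_of_mul_le_mul_right ?_ (hy u)
  calc α * y u = c * (α * x u) := by rw [← hcxu]; ring
    _ ≤ β * y u := key

theorem eigenvalue_eq_of_pos_eigenvector [Nonempty V] (hA : ∀ u v, 0 ≤ A u v) {x y : V → ℝ}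
    {α β : ℝ} (hx : ∀ v, 0 < x v) (hy : ∀ v, 0 < y v) (hAx : A *ᵥ x = α • x)
    (hAy : A *ᵥ y = β • y) : α = β :=
  (eigenvalue_le_of_pos_eigenvector hA hx hy hAx hAy).antisymm
    (eigenvalue_le_of_pos_eigenvector hA hy hx hAy hAx)

end Matrix

section CollatzWielandt

open Matrix

variable [Fintype V] [Nonempty V] {A : Matrix V V ℝ} {x : V → ℝ}

def collatzWielandt (A : Matrix V V ℝ) (x : V → ℝ) : ℝ :=
  univ.inf' univ_nonempty fun u => (A *ᵥ x) u / x u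

theorem collatzWielandt_mul_le (hx : ∀ v, 0 < x v) (u : V) :
    collatzWielandt A x * x u ≤ (A *ᵥ x) u :=
  (le_div_iff₀ (hx u)).1 (inf'_le _ (mem_univ u))

theorem lt_collatzWielandt {c : ℝ} (hx : ∀ v, 0 < x v) (h : ∀ u, c * x u < (A *ᵥ x) u) :
    c < collatzWielandt A x :=
  (lt_inf'_iff _).2 fun u _ => (lt_div_iff₀ (hx u)).2 (h u)

theorem continuousOn_collatzWielandt :
    ContinuousOn (collatzWielandt A) {x | ∀ v, 0 < x v} :=
  ContinuousOn.finset_inf'_apply _ fun u _ =>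
    ((continuous_apply u).comp (continuous_const.matrix_mulVec continuous_id)).continuousOn.div
      (continuous_apply u).continuousOn fun _ hx => (hx u).ne'

variable [DecidableEq V] {m : ℕ}

/-- Otherwise applying the positive matrix `A ^ m` to the maximiser would strictly increase every
ratio `(A *ᵥ x) u / x u`. -/
theorem mulVec_eq_collatzWielandt_smul_of_isMaxOn (hAm : ∀ u v, 0 < (A ^ m) u v)
    {r : V → ℝ} (hr : ∀ v, 0 < r v)
    (hmax : IsMaxOn (collatzWielandt A) ((A ^ m *ᵥ ·) '' stdSimplex ℝ V) r) :
    A *ᵥ r = collatzWielandt A r • r := by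
  set ρ := collatzWielandt A r
  set z := A *ᵥ r - ρ • r
  by_contra hne
  have hz : ∀ v, 0 ≤ z v := fun v => sub_nonneg.2 (collatzWielandt_mul_le hr v)
  have hz0 : z ≠ 0 := fun h => hne (sub_eq_zero.1 h)
  set N := ∑ v, r v
  have hN : 0 < N := sum_pos (fun v _ => hr v) univ_nonempty
  set y := A ^ m *ᵥ (N⁻¹ • r)
  have hy : y ∈ (A ^ m *ᵥ ·) '' stdSimplex ℝ V :=
    ⟨N⁻¹ • r, ⟨fun v => smul_nonneg (inv_nonneg.2 hN.le) (hr v).le,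
      by simp [← mul_sum, N, hN.ne']⟩, rfl⟩
  have hAy : A *ᵥ y = ρ • y + N⁻¹ • (A ^ m *ᵥ z) := by
    rw [mulVec_mulVec, ← pow_succ', pow_succ, ← mulVec_mulVec, mulVec_smul,
      show A *ᵥ r = ρ • r + z by simp [z]]
    simp only [y, mulVec_add, mulVec_smul, smul_add]
    rw [smul_comm]
  have hBz := mulVec_pos_of_pos hAm hz hz0
  have hlt : ρ < collatzWielandt A y := by
    refine lt_collatzWielandt (mulVec_pos_of_pos hAm ?_ ?_) fun u => ?_
    · exact fun v => smul_nonneg (inv_nonneg.2 hN.le) (hr v).le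
    · exact smul_ne_zero (inv_ne_zero hN.ne') fun h =>
        (hr _).ne' (congrFun h (Classical.arbitrary V))
    · rw [hAy]
      simp only [Pi.add_apply, Pi.smul_apply, smul_eq_mul]
      linarith [mul_pos (inv_pos.2 hN) (hBz u)]
  exact (hmax hy).not_gt hlt

theorem IsMixing.exists_pos_eigenvector (hA : ∀ u v, 0 ≤ A u v) (hmix : IsMixing A) :
    ∃ ρ : ℝ, 0 < ρ ∧ ∃ r : V → ℝ, (∀ v, 0 < r v) ∧ A *ᵥ r = ρ • r := by
  obtain ⟨m, hm, hAm⟩ := hmix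
  set K := (A ^ m *ᵥ ·) '' stdSimplex ℝ V
  have hKpos : ∀ y ∈ K, ∀ v, 0 < y v := by
    rintro _ ⟨x, hx, rfl⟩
    exact mulVec_pos_of_pos hAm hx.1 fun h => by simpa [h] using hx.2
  have hK : IsCompact K := (isCompact_stdSimplex ℝ V).image
    (continuous_const.matrix_mulVec continuous_id)
  obtain ⟨r, hrK, hmax⟩ := hK.exists_isMaxOn ((Set.nonempty_coe_sort.1 inferInstance).image _)
    (continuousOn_collatzWielandt.mono hKpos)
  have hr := hKpos r hrK
  have heig := mulVec_eq_collatzWielandt_smul_of_isMaxOn hAm hr hmax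
  refine ⟨collatzWielandt A r, ?_, r, hr, heig⟩
  obtain ⟨u⟩ := ‹Nonempty V›
  have hρ : 0 ≤ collatzWielandt A r := by
    have : 0 ≤ (A *ᵥ r) u := sum_nonneg fun v _ => mul_nonneg (hA u v) (hr v).le
    rw [heig] at this
    exact (mul_nonneg_iff_of_pos_right (hr u)).1 this
  have hpow : 0 < (A ^ m *ᵥ r) u :=
    mulVec_pos_of_pos hAm (fun v => (hr v).le) (fun h => (hr u).ne' (congrFun h u)) u
  rw [pow_mulVec_of_mulVec_eq_smul heig, Pi.smul_apply, smul_eq_mul] at hpow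
  refine hρ.lt_of_ne fun h => ?_
  rw [← h, zero_pow hm.ne', zero_mul] at hpow
  exact hpow.false

end CollatzWielandt

section MarkovChain

open Matrix

variable [Fintype V] {P : Matrix V V ℝ} {pi : V → ℝ}

theorem IsStochastic.sum_vecMul (hP : IsStochastic P) (x : V → ℝ) :
    ∑ v, (x ᵥ* P) v = ∑ u, x u := by
  simp only [vecMul, dotProduct]
  rw [sum_comm]
  exact sum_congr rfl fun u _ => by rw [← mul_sum, hP.2 u, mul_one]

theorem IsStationaryDistrib.vecMul_eq (hpi : IsStationaryDistrib P pi) : pi ᵥ* P = pi :=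
  funext hpi.2.2

theorem IsStationaryDistrib.nonempty (hpi : IsStationaryDistrib P pi) : Nonempty V := by
  by_contra h
  have := hpi.2.1
  simp [not_nonempty_iff.1 h] at this

/-- `P - 1` kills the constant vectors, so some `x ≠ 0` has `x ᵥ* P = x`, and then
`|x| ᵥ* P ≥ |x|` with equal total mass. -/
theorem IsStochastic.exists_isStationaryDistrib [Nonempty V] (hP : IsStochastic P) :
    ∃ pi, IsStationaryDistrib P pi := by
  classical
  have hdet : (P - 1).det = 0 := by
    have h1 : (P - 1) *ᵥ (fun _ => (1 : ℝ)) = 0 := by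
      rw [sub_mulVec, one_mulVec, sub_eq_zero]
      exact funext fun u => by simp [mulVec, dotProduct, hP.2 u]
    exact exists_mulVec_eq_zero_iff.1
      ⟨_, fun h => one_ne_zero (congrFun h (Classical.arbitrary V)), h1⟩
  obtain ⟨x, hx0, hx⟩ := exists_vecMul_eq_zero_iff.2 hdet
  rw [vecMul_sub, vecMul_one, sub_eq_zero] at hx
  set y := fun v => |x v|
  have hle : ∀ v, y v ≤ (y ᵥ* P) v := fun v => by
    calc y v = |(x ᵥ* P) v| := by rw [hx]
      _ ≤ ∑ u, |x u * P u v| := abs_sum_le_sum_abs _ _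
      _ = (y ᵥ* P) v := sum_congr rfl fun u _ => by rw [abs_mul, abs_of_nonneg (hP.1 u v)]
  have hy : y ᵥ* P = y := funext fun v => ((sum_eq_sum_iff_of_le fun v _ => hle v).1
    (hP.sum_vecMul y).symm v (mem_univ v)).symm
  have hS : 0 < ∑ v, y v := by
    obtain ⟨v, hv⟩ := Function.ne_iff.1 hx0
    exact sum_pos' (fun v _ => abs_nonneg _) ⟨v, mem_univ v, abs_pos.2 hv⟩
  refine ⟨(∑ v, y v)⁻¹ • y, fun v => smul_nonneg (inv_nonneg.2 hS.le) (abs_nonneg _), ?_,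
    congrFun (show ((∑ v, y v)⁻¹ • y) ᵥ* P = (∑ v, y v)⁻¹ • y by rw [smul_vecMul, hy])⟩
  simp only [Pi.smul_apply, smul_eq_mul, ← mul_sum, inv_mul_cancel₀ hS.ne']

theorem IsStationaryDistrib.pos_of_isMixing [DecidableEq V] (hpi : IsStationaryDistrib P pi)
    (hmix : IsMixing P) (v : V) : 0 < pi v := by
  obtain ⟨m, -, hPm⟩ := hmix
  have hpow : ∀ n : ℕ, pi ᵥ* P ^ n = pi := fun n => by
    induction n with
    | zero => simp
    | succ n ih => rw [pow_succ, ← vecMul_vecMul, ih, hpi.vecMul_eq]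
  rw [← hpow m, ← mulVec_transpose]
  exact mulVec_pos_of_pos (fun u w => hPm w u) hpi.1
    (fun h => by simpa [h] using hpi.2.1) v

theorem IsStationaryDistrib.sum_mul_sub_eq_zero (hP : IsStochastic P)
    (hpi : IsStationaryDistrib P pi) (f : V → ℝ) :
    ∑ u, ∑ v, pi u * P u v * (f v - f u) = 0 := by
  have hin : ∑ u, ∑ v, pi u * P u v * f v = ∑ v, pi v * f v := by
    rw [sum_comm]
    exact sum_congr rfl fun v _ => by rw [← sum_mul, ← hpi.2.2 v]
  have hout : ∑ u, ∑ v, pi u * P u v * f u = ∑ u, pi u * f u :=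
    sum_congr rfl fun u _ => by rw [← sum_mul, ← mul_sum, hP.2 u, mul_one]
  simp only [mul_sub, sum_sub_distrib, hin, hout, sub_self]

end MarkovChain

section Gibbs

open Real

variable {ι : Type*} [Fintype ι] {p q : ι → ℝ}

theorem mul_log_div_le_sub {a b : ℝ} (ha : 0 ≤ a) (hb : 0 ≤ b) (hab : 0 < a → 0 < b) :
    a * log (b / a) ≤ b - a := by
  rcases ha.eq_or_lt with rfl | ha
  · simpa using hb
  have := log_le_sub_one_of_pos (div_pos (hab ha) ha)
  calc a * log (b / a) ≤ a * (b / a - 1) := mul_le_mul_of_nonneg_left this ha.le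
    _ = b - a := by field_simp

theorem eq_of_mul_log_div_eq_sub {a b : ℝ} (ha : 0 ≤ a) (hab : 0 < a → 0 < b)
    (h : a * log (b / a) = b - a) : a = b := by
  rcases ha.eq_or_lt with rfl | ha
  · simpa using h
  by_contra hne
  have hlt := log_lt_sub_one_of_pos (div_pos (hab ha) ha)
    (by rwa [ne_eq, div_eq_one_iff_eq ha.ne', eq_comm])
  have : a * log (b / a) < a * (b / a - 1) := mul_lt_mul_of_pos_left hlt ha
  rw [mul_sub, mul_div_cancel₀ _ ha.ne', mul_one] at this
  exact this.ne h

theorem sum_mul_log_div_le_zero (hp : ∀ i, 0 ≤ p i) (hq : ∀ i, 0 ≤ q i)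
    (hpq : ∀ i, 0 < p i → 0 < q i) (hsum : ∑ i, q i ≤ ∑ i, p i) :
    ∑ i, p i * log (q i / p i) ≤ 0 :=
  calc ∑ i, p i * log (q i / p i) ≤ ∑ i, (q i - p i) :=
        sum_le_sum fun i _ => mul_log_div_le_sub (hp i) (hq i) (hpq i)
    _ ≤ 0 := by rw [sum_sub_distrib]; linarith

theorem eq_of_sum_mul_log_div_eq_zero (hp : ∀ i, 0 ≤ p i) (hq : ∀ i, 0 ≤ q i)
    (hpq : ∀ i, 0 < p i → 0 < q i) (hsum : ∑ i, q i ≤ ∑ i, p i)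
    (h : ∑ i, p i * log (q i / p i) = 0) : p = q := by
  have hdef : ∀ i ∈ univ, 0 ≤ q i - p i - p i * log (q i / p i) := fun i _ =>
    sub_nonneg.2 (mul_log_div_le_sub (hp i) (hq i) (hpq i))
  have hzero : ∑ i, (q i - p i - p i * log (q i / p i)) = 0 := by
    refine le_antisymm ?_ (sum_nonneg hdef)
    rw [sum_sub_distrib, sum_sub_distrib, h]
    linarith
  exact funext fun i => eq_of_mul_log_div_eq_sub (hp i) (hpq i)
    (by linarith [(sum_eq_zero_iff_of_nonneg hdef).1 hzero i (mem_univ i)])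

end Gibbs

section Parry

open Matrix Real

def supportMatrix (P : Matrix V V ℝ) : Matrix V V ℝ :=
  Matrix.of fun u v => if 0 < P u v then 1 else 0

/-- For `r` the Perron eigenvector of `supportMatrix P` with eigenvalue `ρ`, this is the Parry
chain on the transition graph of `P`. -/
def parryMatrix (P : Matrix V V ℝ) (r : V → ℝ) (ρ : ℝ) : Matrix V V ℝ :=
  Matrix.of fun u v => if 0 < P u v then r v / (ρ * r u) else 0

variable {P : Matrix V V ℝ} {r : V → ℝ} {ρ : ℝ}

theorem supportMatrix_apply (u v : V) :
    supportMatrix P u v = if 0 < P u v then 1 else 0 := rfl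

theorem parryMatrix_apply (u v : V) :
    parryMatrix P r ρ u v = if 0 < P u v then r v / (ρ * r u) else 0 := rfl

theorem supportMatrix_nonneg (u v : V) : 0 ≤ supportMatrix P u v := by
  rw [supportMatrix_apply]; split_ifs <;> norm_num

theorem parryMatrix_pos_iff (hr : ∀ v, 0 < r v) (hρ : 0 < ρ) (u v : V) :
    0 < parryMatrix P r ρ u v ↔ 0 < P u v := by
  rw [parryMatrix_apply]
  split_ifs with h
  · simpa [h] using div_pos (hr v) (mul_pos hρ (hr u))
  · simp [h]

theorem parryMatrix_parryMatrix (hr : ∀ v, 0 < r v) (hρ : 0 < ρ) :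
    parryMatrix (parryMatrix P r ρ) r ρ = parryMatrix P r ρ := by
  ext u v
  exact if_congr (parryMatrix_pos_iff hr hρ u v) rfl rfl

variable [Fintype V] {pi : V → ℝ}

theorem IsStochastic.le_supportMatrix (hP : IsStochastic P) (u v : V) :
    P u v ≤ supportMatrix P u v := by
  rw [supportMatrix_apply]
  split_ifs with h
  · exact (single_le_sum (fun w _ => hP.1 u w) (mem_univ v)).trans_eq (hP.2 u)
  · exact not_lt.1 h

theorem IsMixing.supportMatrix [DecidableEq V] (hP : IsStochastic P) (hmix : IsMixing P) :
    IsMixing (supportMatrix P) := by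
  obtain ⟨m, hm, hPm⟩ := hmix
  exact ⟨m, hm, fun u v => (hPm u v).trans_le
    (pow_apply_le_pow_apply hP.1 hP.le_supportMatrix m u v)⟩

theorem isStochastic_parryMatrix (hr : ∀ v, 0 < r v) (hρ : 0 < ρ)
    (hAr : supportMatrix P *ᵥ r = ρ • r) : IsStochastic (parryMatrix P r ρ) := by
  refine ⟨fun u v => ?_, fun u => ?_⟩
  · rw [parryMatrix_apply]
    split_ifs
    · exact (div_pos (hr v) (mul_pos hρ (hr u))).le
    · exact le_rfl
  · have hrow : ∑ v, supportMatrix P u v * r v = ρ * r u := congrFun hAr u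
    calc ∑ v, parryMatrix P r ρ u v = (∑ v, supportMatrix P u v * r v) / (ρ * r u) := by
          rw [sum_div]
          exact sum_congr rfl fun v _ => by
            rw [parryMatrix_apply, supportMatrix_apply]; split_ifs <;> simp
      _ = 1 := by rw [hrow, div_self (mul_pos hρ (hr u)).ne']

theorem chainEntropy_sub_log_eq (hP : IsStochastic P) (hpi : IsStationaryDistrib P pi)
    (hr : ∀ v, 0 < r v) (hρ : 0 < ρ) :
    chainEntropy P pi - log ρ =
      ∑ u, pi u * ∑ v, P u v * log (parryMatrix P r ρ u v / P u v) := by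
  have hterm : ∀ u v, pi u * (P u v * log (parryMatrix P r ρ u v / P u v)) =
      pi u * P u v * (log (r v) - log (r u)) - pi u * P u v * log ρ
        - pi u * P u v * log (P u v) := fun u v => by
    rw [parryMatrix_apply]
    split_ifs with h
    · rw [log_div (div_pos (hr v) (mul_pos hρ (hr u))).ne' h.ne',
        log_div (hr v).ne' (mul_pos hρ (hr u)).ne', log_mul hρ.ne' (hr u).ne']
      ring
    · simp [le_antisymm (not_lt.1 h) (hP.1 u v)]
  have hmass : ∑ u, ∑ v, pi u * P u v * log ρ = log ρ := by
    simp only [← sum_mul, ← mul_sum, hP.2, mul_one, hpi.2.1, one_mul]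
  calc chainEntropy P pi - log ρ
      = 0 - log ρ - ∑ u, ∑ v, pi u * P u v * log (P u v) := by rw [chainEntropy]; ring
    _ = ∑ u, ∑ v, pi u * P u v * (log (r v) - log (r u)) - ∑ u, ∑ v, pi u * P u v * log ρ
          - ∑ u, ∑ v, pi u * P u v * log (P u v) := by
        rw [hpi.sum_mul_sub_eq_zero hP, hmass]
    _ = ∑ u, pi u * ∑ v, P u v * log (parryMatrix P r ρ u v / P u v) := by
        simp only [mul_sum, hterm, sum_sub_distrib]

theorem sum_mul_log_parryMatrix_div_le_zero (hP : IsStochastic P) (hr : ∀ v, 0 < r v)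
    (hρ : 0 < ρ) (hAr : supportMatrix P *ᵥ r = ρ • r) (u : V) :
    ∑ v, P u v * log (parryMatrix P r ρ u v / P u v) ≤ 0 :=
  sum_mul_log_div_le_zero (hP.1 u) ((isStochastic_parryMatrix hr hρ hAr).1 u)
    (fun v => (parryMatrix_pos_iff hr hρ u v).2)
    (by rw [(isStochastic_parryMatrix hr hρ hAr).2 u, hP.2 u])

theorem chainEntropy_le_log (hP : IsStochastic P) (hpi : IsStationaryDistrib P pi)
    (hr : ∀ v, 0 < r v) (hρ : 0 < ρ) (hAr : supportMatrix P *ᵥ r = ρ • r) :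
    chainEntropy P pi ≤ log ρ := by
  have := chainEntropy_sub_log_eq hP hpi hr hρ
  have : ∑ u, pi u * ∑ v, P u v * log (parryMatrix P r ρ u v / P u v) ≤ 0 :=
    sum_nonpos fun u _ => mul_nonpos_of_nonneg_of_nonpos (hpi.1 u)
      (sum_mul_log_parryMatrix_div_le_zero hP hr hρ hAr u)
  linarith

theorem eq_parryMatrix_of_chainEntropy_eq (hP : IsStochastic P)
    (hpi : IsStationaryDistrib P pi) (hr : ∀ v, 0 < r v) (hρ : 0 < ρ)
    (hAr : supportMatrix P *ᵥ r = ρ • r) (hpos : ∀ u, 0 < pi u)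
    (h : chainEntropy P pi = log ρ) : P = parryMatrix P r ρ := by
  have hsum := chainEntropy_sub_log_eq hP hpi hr hρ
  rw [h, sub_self, eq_comm] at hsum
  have hrow := (sum_eq_zero_iff_of_nonpos fun u _ => mul_nonpos_of_nonneg_of_nonpos (hpi.1 u)
    (sum_mul_log_parryMatrix_div_le_zero hP hr hρ hAr u)).1 hsum
  funext u
  exact eq_of_sum_mul_log_div_eq_zero (hP.1 u) ((isStochastic_parryMatrix hr hρ hAr).1 u)
    (fun v => (parryMatrix_pos_iff hr hρ u v).2)
    (by rw [(isStochastic_parryMatrix hr hρ hAr).2 u, hP.2 u])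
    ((mul_eq_zero.1 (hrow u (mem_univ u))).resolve_left (hpos u).ne')

theorem chainEntropy_parryMatrix (hr : ∀ v, 0 < r v) (hρ : 0 < ρ)
    (hAr : supportMatrix P *ᵥ r = ρ • r) {pi' : V → ℝ}
    (hpi' : IsStationaryDistrib (parryMatrix P r ρ) pi') :
    chainEntropy (parryMatrix P r ρ) pi' = log ρ := by
  have h := chainEntropy_sub_log_eq (isStochastic_parryMatrix hr hρ hAr) hpi' hr hρ
  have hlog : ∀ x : ℝ, log (x / x) = 0 := fun x => by
    rcases eq_or_ne x 0 with hx | hx <;> simp [hx]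
  simp only [parryMatrix_parryMatrix hr hρ, hlog, mul_zero, sum_const_zero] at h
  linarith

theorem sq_parryMatrix_mulVec_inv (hr : ∀ v, 0 < r v) (hρ : 0 < ρ)
    (hAr : supportMatrix P *ᵥ r = ρ • r) :
    (Matrix.of fun u v => parryMatrix P r ρ u v ^ 2) *ᵥ r⁻¹ = ρ⁻¹ • r⁻¹ := by
  funext u
  have hrow : ∑ v, supportMatrix P u v * r v = ρ * r u := congrFun hAr u
  show ∑ v, parryMatrix P r ρ u v ^ 2 * (r v)⁻¹ = ρ⁻¹ * (r u)⁻¹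
  calc ∑ v, parryMatrix P r ρ u v ^ 2 * (r v)⁻¹
      = (∑ v, supportMatrix P u v * r v) / (ρ * r u) ^ 2 := by
        rw [sum_div]
        refine sum_congr rfl fun v _ => ?_
        rw [parryMatrix_apply, supportMatrix_apply]
        split_ifs
        · field_simp [(hr v).ne']
        · simp
    _ = ρ⁻¹ * (r u)⁻¹ := by
        rw [hrow]
        field_simp [hρ.ne', (hr u).ne']

end Parry

/-- if `(V,P)` is a measure of maximal entropy — i.e. `h(V,P) ≥ h(V,P')` for
every stochastic `P'` (with stationary distribution `π'`) whose support is contained in that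
of `P` — then `L(V,P) = h(V,P)`, i.e. `-log λ = h(V,P)` for `λ` the Perron eigenvalue of
`Q(u,v) = P(u,v)²`. -/
theorem L_eq_entropy_of_maximal_entropy [Fintype V] [DecidableEq V] (P : Matrix V V ℝ)
    (hP : IsStochastic P) (hmix : IsMixing P) (pi : V → ℝ) (hpi : IsStationaryDistrib P pi)
    (lam : ℝ) (φ : V → ℝ) (hφ : ∀ v, 0 < φ v)
    (heig : ∀ u, ∑ v, (P u v) ^ 2 * φ v = lam * φ u)
    (hmax : ∀ (P' : Matrix V V ℝ) (pi' : V → ℝ), IsStochastic P' → IsStationaryDistrib P' pi' →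
      (∀ u v, 0 < P' u v → 0 < P u v) → chainEntropy P' pi' ≤ chainEntropy P pi) :
    -Real.log lam = chainEntropy P pi := by
  have : Nonempty V := hpi.nonempty
  obtain ⟨ρ, hρ, r, hr, hAr⟩ :=
    (hmix.supportMatrix hP).exists_pos_eigenvector fun u v => supportMatrix_nonneg u v
  have hparry := isStochastic_parryMatrix hr hρ hAr
  obtain ⟨pi', hpi'⟩ := hparry.exists_isStationaryDistrib
  have hent : chainEntropy P pi = Real.log ρ := by
    refine (chainEntropy_le_log hP hpi hr hρ hAr).antisymm ?_
    rw [← chainEntropy_parryMatrix hr hρ hAr hpi']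
    exact hmax _ _ hparry hpi' fun u v => (parryMatrix_pos_iff hr hρ u v).1
  have hPparry := eq_parryMatrix_of_chainEntropy_eq hP hpi hr hρ hAr
    (hpi.pos_of_isMixing hmix) hent
  have hQ := sq_parryMatrix_mulVec_inv hr hρ hAr
  rw [← hPparry] at hQ
  have hlam : lam = ρ⁻¹ := Matrix.eigenvalue_eq_of_pos_eigenvector (fun u v => sq_nonneg (P u v))
    hφ (fun v => inv_pos.2 (hr v)) (funext heig) hQ
  rw [hlam, Real.log_inv, neg_neg, hent]
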